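/- arXiv:1509.03092 — 2 statements merged into one kernel-verified Lean document; each statement's English description precedes it below -/
import Mathlib

section
/- Let r ≥ 2 and let G be an r-regular simple graph of order n which has an S_{1,r-1}-decomposition. Then 2(r+1) divides rn and the independence number satisfies α(G) ≥ rn/(2(r+1)). -/
open SimpleGraph

variable {V : Type*}

/-- A (potential) copy of the double-star `S_{1,r-1}` in a graph on vertex set `V`.
`center` is the vertex of degree `r`, `mid` is the vertex of degree 2 (adjacent to `center`),
`pend` is the pendant neighbour of `mid`, and `leaf i` are the `r - 1` pendant
neighbours of `center`.  For `r = 3` this is the double-star `S_{1,2}`. -/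
structure DoubleStarCopy (V : Type*) (r : ℕ) where
  center : V
  mid : V
  pend : V
  leaf : Fin (r - 1) → V

namespace DoubleStarCopy

variable {r : ℕ}

/-- The list of vertices of the copy. -/
def vertList (t : DoubleStarCopy V r) : List V :=
  t.center :: t.mid :: t.pend :: List.ofFn t.leaf

/-- The vertex set of the copy. -/
def verts (t : DoubleStarCopy V r) : Set V := {v | v ∈ t.vertList}

/-- The pendant (degree-one) vertices of the copy. -/
def pendants (t : DoubleStarCopy V r) : Set V := insert t.pend (Set.range t.leaf)

/-- The edge set of the copy. -/
def edges (t : DoubleStarCopy V r) : Set (Sym2 V) :=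
  insert s(t.center, t.mid) (insert s(t.mid, t.pend)
    (Set.range fun i => s(t.center, t.leaf i)))

/-- `t` is a genuine copy of the double-star `S_{1,r-1}` inside `G`:
its vertices are pairwise distinct and all its edges are edges of `G`. -/
def IsCopyIn (G : SimpleGraph V) (t : DoubleStarCopy V r) : Prop :=
  t.vertList.Nodup ∧ t.edges ⊆ G.edgeSet

end DoubleStarCopy

/-- `𝒟` is an `S_{1,r-1}`-decomposition of `G`: every member of `𝒟` is a copy of the
double-star `S_{1,r-1}` in `G`, and every edge of `G` lies in exactly one member of `𝒟`. -/
def IsDSDecompOf (G : SimpleGraph V) (r : ℕ) (𝒟 : Set (DoubleStarCopy V r)) : Prop :=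
  (∀ t ∈ 𝒟, t.IsCopyIn G) ∧ ∀ e ∈ G.edgeSet, ∃! t, t ∈ 𝒟 ∧ e ∈ t.edges

/-- `G` has an `S_{1,r-1}`-decomposition. -/
def HasDSDecomp (G : SimpleGraph V) (r : ℕ) : Prop :=
  ∃ 𝒟 : Set (DoubleStarCopy V r), IsDSDecompOf G r 𝒟

/-- `G` is `(S_{1,r-1}, S)`-decomposable: it has an `S_{1,r-1}`-decomposition in which `S`
is exactly the set of vertices occurring as the degree-`r` vertex of some copy. -/
def IsDSSDecomposable (G : SimpleGraph V) (r : ℕ) (S : Set V) : Prop :=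
  ∃ 𝒟 : Set (DoubleStarCopy V r), IsDSDecompOf G r 𝒟 ∧ S = {v | ∃ t ∈ 𝒟, t.center = v}

/-- `S` is an independent set of `G`. -/
def IsIndepSetIn (G : SimpleGraph V) (S : Set V) : Prop :=
  ∀ ⦃u⦄, u ∈ S → ∀ ⦃v⦄, v ∈ S → ¬ G.Adj u v

/-- The independence number `α(G)`. -/
noncomputable def indepNumber (G : SimpleGraph V) : ℕ :=
  sSup {k | ∃ S : Set V, IsIndepSetIn G S ∧ S.ncard = k}

/-- `D` is a dominating set of `G`. -/
def IsDomSet (G : SimpleGraph V) (D : Set V) : Prop :=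
  ∀ v ∉ D, ∃ d ∈ D, G.Adj v d

/-- The domination number `γ(G)`. -/
noncomputable def domNumber (G : SimpleGraph V) : ℕ :=
  sInf {k | ∃ D : Set V, IsDomSet G D ∧ D.ncard = k}

/-- `N(X)`, the union of the neighbourhoods of the vertices of `X`. -/
def nbhd (G : SimpleGraph V) (X : Set V) : Set V := {v | ∃ x ∈ X, G.Adj x v}

/-- The degree of `v` in the graph `G ∖ S` (for `v ∉ S`). -/
noncomputable def degIn (G : SimpleGraph V) (S : Set V) (v : V) : ℕ :=
  {w | w ∉ S ∧ G.Adj v w}.ncard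

/-- The vertex `v` lies on a cycle of length `k` in `G`. -/
def InCycleOfLength (G : SimpleGraph V) (v : V) (k : ℕ) : Prop :=
  ∃ c : G.Walk v v, c.IsCycle ∧ c.length = k

/-- A graph is a cycle: it has a (genuine, simple) cycle passing through all of
its vertices and using all of its edges. -/
def IsCycleGraph {W : Type*} (H : SimpleGraph W) : Prop :=
  ∃ (v : W) (c : H.Walk v v), c.IsCycle ∧ (∀ x, x ∈ c.support) ∧ ∀ e ∈ H.edgeSet, e ∈ c.edges

/-- A graph is a path: it has a simple path passing through all of its vertices and
using all of its edges. -/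
def IsPathGraph {W : Type*} (H : SimpleGraph W) : Prop :=
  ∃ (u v : W) (p : H.Walk u v), p.IsPath ∧ (∀ x, x ∈ p.support) ∧ ∀ e ∈ H.edgeSet, e ∈ p.edges

/-- `S` is a cycling set of `G`: every connected component of `G ∖ S` is a cycle. -/
def IsCyclingSet (G : SimpleGraph V) (S : Set V) : Prop :=
  ∀ c : (G.induce Sᶜ).ConnectedComponent, IsCycleGraph ((G.induce Sᶜ).induce c.supp)

/-- `(A, B)` is a bipartition of `G`. -/
def IsBipartitionOf (G : SimpleGraph V) (A B : Set V) : Prop :=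
  A ∪ B = Set.univ ∧ Disjoint A B ∧ ∀ ⦃u v⦄, G.Adj u v → (u ∈ A ↔ v ∈ B)

/-- The edge set of the graph `G ∖ S`: edges of `G` avoiding `S`. -/
def removedEdges (G : SimpleGraph V) (S : Set V) : Set (Sym2 V) :=
  {e | e ∈ G.edgeSet ∧ ∀ v ∈ e, v ∉ S}

/-- Adjacency in the auxiliary bipartite graph `H = (S, L)`:
`s ∈ S` is adjacent to the vertex `u_e` corresponding to an edge `e` of `G ∖ S`
iff `G` has an edge with one end `s` whose other end lies on `e`. -/
def auxAdj (G : SimpleGraph V) (s : V) (e : Sym2 V) : Prop :=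
  ∃ w ∈ e, G.Adj s w

/-- The auxiliary bipartite graph `H = (S, L)` has a perfect matching: a bijection
between `S` and the edges of `G ∖ S` matching each `s ∈ S` with an `H`-neighbour. -/
def AuxHasPerfectMatching (G : SimpleGraph V) (S : Set V) : Prop :=
  ∃ m : ↥S ≃ ↥(removedEdges G S), ∀ s : ↥S, auxAdj G (s : V) ((m s : Sym2 V))

/-!
In an `r`-regular graph the centre of a copy of `S_{1,r-1}` already has all its `r` edges inside
the copy. Hence in a decomposition two copies sharing an edge at a centre coincide: the centres
of distinct copies are distinct and pairwise non-adjacent, so they form an independent set with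
one vertex per copy. Counting edges, there are `rn / (2(r + 1))` copies.
-/

open Finset

namespace DoubleStarCopy

variable {r : ℕ} {t : DoubleStarCopy V r}

instance [Finite V] : Finite (DoubleStarCopy V r) :=
  Finite.of_injective (fun t => (t.center, t.mid, t.pend, t.leaf))
    (by rintro ⟨⟩ ⟨⟩ h; simpa using h)

lemma ne_of_vertList_nodup (h : t.vertList.Nodup) :
    t.center ≠ t.mid ∧ t.center ≠ t.pend ∧ (∀ i, t.center ≠ t.leaf i) ∧
    t.mid ≠ t.pend ∧ (∀ i, t.mid ≠ t.leaf i) ∧ (∀ i, t.pend ≠ t.leaf i) ∧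
    Function.Injective t.leaf := by
  simp only [vertList, List.nodup_cons, List.mem_cons, List.mem_ofFn, List.nodup_ofFn,
    not_or, not_exists] at h
  exact ⟨h.1.1, h.1.2.1, fun i e => h.1.2.2 i e.symm, h.2.1.1, fun i e => h.2.1.2 i e.symm,
    fun i e => h.2.2.1 i e.symm, h.2.2.2⟩

section DecidableEq

variable [DecidableEq V]

def edgeFinset (t : DoubleStarCopy V r) : Finset (Sym2 V) :=
  insert s(t.center, t.mid) (insert s(t.mid, t.pend) (univ.image fun i => s(t.center, t.leaf i)))

lemma mem_edgeFinset {e : Sym2 V} : e ∈ t.edgeFinset ↔ e ∈ t.edges := by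
  simp [edgeFinset, edges]

lemma card_edgeFinset (hr : r ≠ 0) (h : t.vertList.Nodup) : #t.edgeFinset = r + 1 := by
  obtain ⟨hcm, hcp, hcl, -, hml, hpl, hleaf⟩ := ne_of_vertList_nodup h
  have hspoke : Function.Injective fun i => s(t.center, t.leaf i) := by
    intro i j hij
    rcases Sym2.eq_iff.mp hij with ⟨-, h'⟩ | ⟨h', -⟩
    · exact hleaf h'
    · exact absurd h' (hcl j)
  rw [edgeFinset, card_insert_of_notMem, card_insert_of_notMem, card_image_of_injective _ hspoke,
    card_univ, Fintype.card_fin]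
  · omega
  · simp only [mem_image, mem_univ, true_and, not_exists, Sym2.eq_iff]
    intro i
    have := hml i; have := hpl i
    tauto
  · simp only [mem_insert, mem_image, mem_univ, true_and, not_exists, not_or, Sym2.eq_iff]
    refine ⟨by tauto, fun i => ?_⟩
    have := hcl i; have := hml i
    tauto

def centerNbrs (t : DoubleStarCopy V r) : Finset V :=
  insert t.mid (univ.image t.leaf)

lemma card_centerNbrs (hr : r ≠ 0) (h : t.vertList.Nodup) : #t.centerNbrs = r := by
  obtain ⟨-, -, -, -, hml, -, hleaf⟩ := ne_of_vertList_nodup h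
  rw [centerNbrs, card_insert_of_notMem, card_image_of_injective _ hleaf, card_univ,
    Fintype.card_fin]
  · omega
  · simpa using fun i e => hml i e.symm

end DecidableEq

variable {G : SimpleGraph V} [G.LocallyFinite]

lemma IsCopyIn.centerNbrs_subset [DecidableEq V] (ht : t.IsCopyIn G) :
    t.centerNbrs ⊆ G.neighborFinset t.center := by
  intro w hw
  rw [mem_neighborFinset, ← mem_edgeSet]
  apply ht.2
  simp only [centerNbrs, mem_insert, mem_image, mem_univ, true_and] at hw
  rcases hw with rfl | ⟨i, rfl⟩
  · exact Or.inl rfl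
  · exact Or.inr (Or.inr ⟨i, rfl⟩)

lemma IsCopyIn.neighborFinset_center [DecidableEq V] (hr : r ≠ 0)
    (hreg : G.IsRegularOfDegree r) (ht : t.IsCopyIn G) :
    G.neighborFinset t.center = t.centerNbrs :=
  (eq_of_subset_of_card_le ht.centerNbrs_subset (by
    rw [card_neighborFinset_eq_degree, hreg.degree_eq, card_centerNbrs hr ht.1])).symm

lemma IsCopyIn.mem_edges_of_center_mem (hr : r ≠ 0) (hreg : G.IsRegularOfDegree r)
    (ht : t.IsCopyIn G) {e : Sym2 V} (he : e ∈ G.edgeSet) (hc : t.center ∈ e) :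
    e ∈ t.edges := by
  classical
  obtain ⟨w, rfl⟩ := Sym2.mem_iff_exists.mp hc
  have hw : w ∈ t.centerNbrs := by
    rw [← ht.neighborFinset_center hr hreg, mem_neighborFinset]
    exact he
  simp only [centerNbrs, mem_insert, mem_image, mem_univ, true_and] at hw
  rcases hw with rfl | ⟨i, rfl⟩
  · exact Or.inl rfl
  · exact Or.inr (Or.inr ⟨i, rfl⟩)

end DoubleStarCopy

namespace IsDSDecompOf

open DoubleStarCopy

variable {G : SimpleGraph V} {r : ℕ} {𝒟 : Set (DoubleStarCopy V r)} {t₁ t₂ : DoubleStarCopy V r}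

lemma eq_of_mem_edges (h𝒟 : IsDSDecompOf G r 𝒟) (h₁ : t₁ ∈ 𝒟) (h₂ : t₂ ∈ 𝒟) {e : Sym2 V}
    (he : e ∈ G.edgeSet) (he₁ : e ∈ t₁.edges) (he₂ : e ∈ t₂.edges) : t₁ = t₂ :=
  (h𝒟.2 e he).unique ⟨h₁, he₁⟩ ⟨h₂, he₂⟩

section Regular

variable [G.LocallyFinite] (hr : r ≠ 0) (hreg : G.IsRegularOfDegree r)
include hr hreg

lemma eq_of_center_mem (h𝒟 : IsDSDecompOf G r 𝒟) (h₁ : t₁ ∈ 𝒟) (h₂ : t₂ ∈ 𝒟) {e : Sym2 V}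
    (he : e ∈ G.edgeSet) (hc₁ : t₁.center ∈ e) (hc₂ : t₂.center ∈ e) : t₁ = t₂ :=
  h𝒟.eq_of_mem_edges h₁ h₂ he ((h𝒟.1 t₁ h₁).mem_edges_of_center_mem hr hreg he hc₁)
    ((h𝒟.1 t₂ h₂).mem_edges_of_center_mem hr hreg he hc₂)

lemma injOn_center (h𝒟 : IsDSDecompOf G r 𝒟) : Set.InjOn DoubleStarCopy.center 𝒟 := by
  intro t₁ h₁ t₂ h₂ hc
  have he : s(t₁.center, t₁.mid) ∈ G.edgeSet := (h𝒟.1 t₁ h₁).2 (Or.inl rfl)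
  exact h𝒟.eq_of_center_mem hr hreg h₁ h₂ he (Sym2.mem_mk_left _ _)
    (hc ▸ Sym2.mem_mk_left _ _)

lemma isIndepSetIn_image_center (h𝒟 : IsDSDecompOf G r 𝒟) :
    IsIndepSetIn G (DoubleStarCopy.center '' 𝒟) := by
  rintro _ ⟨t₁, h₁, rfl⟩ _ ⟨t₂, h₂, rfl⟩ hadj
  have := h𝒟.eq_of_center_mem hr hreg h₁ h₂ (e := s(t₁.center, t₂.center)) hadj
    (Sym2.mem_mk_left _ _) (Sym2.mem_mk_right _ _)
  exact hadj.ne (congrArg DoubleStarCopy.center this)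

end Regular

lemma card_edgeFinset [Fintype G.edgeSet] {D : Finset (DoubleStarCopy V r)} (hr : r ≠ 0)
    (hD : IsDSDecompOf G r D) : #G.edgeFinset = (r + 1) * #D := by
  classical
  have hunion : G.edgeFinset = D.biUnion DoubleStarCopy.edgeFinset := by
    ext e
    simp only [SimpleGraph.mem_edgeFinset, mem_biUnion, DoubleStarCopy.mem_edgeFinset]
    refine ⟨fun he => ?_, fun ⟨t, ht, hte⟩ => (hD.1 t ht).2 hte⟩
    obtain ⟨t, ⟨ht, hte⟩, -⟩ := hD.2 e he
    exact ⟨t, ht, hte⟩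
  have hdisj : (D : Set (DoubleStarCopy V r)).PairwiseDisjoint DoubleStarCopy.edgeFinset := by
    intro t₁ h₁ t₂ h₂ hne
    rw [Function.onFun, Finset.disjoint_left]
    intro e he₁ he₂
    rw [DoubleStarCopy.mem_edgeFinset] at he₁ he₂
    exact hne (hD.eq_of_mem_edges h₁ h₂ ((hD.1 t₁ h₁).2 he₁) he₁ he₂)
  rw [hunion, card_biUnion hdisj, sum_congr rfl fun t ht => DoubleStarCopy.card_edgeFinset hr (hD.1 t ht).1,
    sum_const, smul_eq_mul, mul_comm]

end IsDSDecompOf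

lemma IsIndepSetIn.ncard_le_indepNumber [Finite V] {G : SimpleGraph V} {S : Set V}
    (hS : IsIndepSetIn G S) : S.ncard ≤ indepNumber G :=
  le_csSup ⟨Nat.card V, by rintro _ ⟨T, -, rfl⟩; exact T.ncard_le_card⟩ ⟨S, hS, rfl⟩

/-- Let `r ≥ 2` and let `G` be an `r`-regular graph of order `n` with an
`S_{1,r-1}`-decomposition.  Then `2(r+1) ∣ rn` and `α(G) ≥ rn/(2(r+1))`. -/
theorem statement11 {V : Type*} [Fintype V] (G : SimpleGraph V) [DecidableRel G.Adj]
    (n : ℕ) (hn : Fintype.card V = n) (r : ℕ) (hr : 2 ≤ r)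
    (hreg : G.IsRegularOfDegree r) (hdec : HasDSDecomp G r) :
    2 * (r + 1) ∣ r * n ∧ r * n ≤ 2 * (r + 1) * indepNumber G := by
  classical
  obtain ⟨𝒟, h𝒟⟩ := hdec
  obtain ⟨D, rfl⟩ := 𝒟.toFinite.exists_finset_coe
  have hr₀ : r ≠ 0 := by omega
  have hcount : r * n = 2 * (r + 1) * #D := by
    calc r * n = ∑ v, G.degree v := by simp [hreg.degree_eq, ← hn, mul_comm]
      _ = 2 * #G.edgeFinset := G.sum_degrees_eq_twice_card_edges
      _ = 2 * (r + 1) * #D := by rw [h𝒟.card_edgeFinset hr₀, mul_assoc]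
  refine ⟨⟨#D, hcount⟩, hcount ▸ Nat.mul_le_mul_left _ ?_⟩
  calc #D = (DoubleStarCopy.center '' (D : Set (DoubleStarCopy V r))).ncard := by
        rw [(h𝒟.injOn_center hr₀ hreg).ncard_image, Set.ncard_coe_finset]
    _ ≤ indepNumber G := (h𝒟.isIndepSetIn_image_center hr₀ hreg).ncard_le_indepNumber
end

section
/- Let r ≥ 2 and let G be a bipartite r-regular simple graph of order 2n such that (r+1) divides n and the domination number satisfies γ(G) = 2n/(r+1). Then G has an S_{1,r-1}-decomposition. -/
/-!
A minimum dominating set `D` of the `r`-regular graph `G` has `(r + 1) * |D| = |V|`, so the closed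
neighbourhoods of its vertices partition `V`: `D` is an efficient dominating set. Deleting `D`
leaves an `(r - 1)`-regular bipartite graph between `A \ D` and `B \ D`, which by Hall's theorem
has a perfect matching `u ↦ m u`. Every `u ∈ A \ D` is then the centre of a copy of `S_{1,r-1}`
consisting of its `r` incident edges and the edge from `m u` to its unique neighbour in `D`,
and these copies partition the edges of `G`.
-/

open SimpleGraph

variable {V : Type*}

open Finset

/-- Double counting gives both Hall's condition and `card α = card β`. -/
theorem exists_equiv_of_forall_card_filter_eq {α β : Type*} [Fintype α] [Fintype β]
    (R : α → β → Prop) [DecidableRel R] {k : ℕ} (hk : 0 < k)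
    (hα : ∀ a, #{b | R a b} = k) (hβ : ∀ b, #{a | R a b} = k) :
    ∃ e : α ≃ β, ∀ a, R a (e a) := by
  have hall : ∀ s : Finset α, #s ≤ #{b | ∃ a ∈ s, R a b} := by
    intro s
    refine Nat.le_of_mul_le_mul_right (card_mul_le_card_mul R (m := k) (n := k) ?_ ?_) hk
    · intro a ha
      rw [← hα a]
      exact card_le_card fun b hb => by
        simp only [bipartiteAbove, mem_filter, mem_univ, true_and] at hb ⊢
        exact ⟨⟨a, ha, hb⟩, hb⟩
    · intro b _
      rw [← hβ b]
      exact card_le_card fun a ha => by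
        simp only [bipartiteBelow, mem_filter, mem_univ, true_and] at ha ⊢
        exact ha.2
  obtain ⟨f, hf, hR⟩ := (Fintype.all_card_le_filter_rel_iff_exists_injective R).mp hall
  have hcard : Fintype.card α = Fintype.card β := by
    have := card_mul_eq_card_mul R (s := univ) (t := univ) (m := k) (n := k)
      (fun a _ => by simpa [bipartiteAbove] using hα a)
      (fun b _ => by simpa [bipartiteBelow] using hβ b)
    exact Nat.eq_of_mul_eq_mul_right hk this
  exact ⟨.ofBijective f ((Fintype.bijective_iff_injective_and_card f).2 ⟨hf, hcard⟩), hR⟩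

section EfficientDomination

variable {G : SimpleGraph V} {D : Set V}

def IsEfficientDomSet (G : SimpleGraph V) (D : Set V) : Prop :=
  ∀ v, ∃! d, d ∈ D ∧ (v = d ∨ G.Adj d v)

theorem exists_isDomSet_ncard_eq_domNumber (G : SimpleGraph V) :
    ∃ D, IsDomSet G D ∧ D.ncard = domNumber G :=
  Nat.sInf_mem (s := {k | ∃ D : Set V, IsDomSet G D ∧ D.ncard = k})
    ⟨_, Set.univ, fun v hv => absurd (Set.mem_univ v) hv, rfl⟩

/-- The closed neighbourhoods of the members of `D` cover `V` and have total size `|V|`,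
so they are pairwise disjoint. -/
theorem isEfficientDomSet_of_card [Fintype V] [DecidableRel G.Adj] {r : ℕ}
    (hreg : G.IsRegularOfDegree r) (hD : IsDomSet G D)
    (hcard : (r + 1) * D.ncard = Fintype.card V) : IsEfficientDomSet G D := by
  classical
  set N : V → Finset V := fun d => insert d (G.neighborFinset d)
  have hN : ∀ d v, v ∈ N d ↔ v = d ∨ G.Adj d v := by simp [N]
  set P := D.toFinset.sigma N
  have hP : ∀ d v, (⟨d, v⟩ : Σ _ : V, V) ∈ P ↔ d ∈ D ∧ (v = d ∨ G.Adj d v) := by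
    simp [P, hN]
  have hsurj : Set.SurjOn Sigma.snd (P : Set (Σ _ : V, V)) (univ : Finset V) := by
    intro v _
    by_cases hv : v ∈ D
    · exact ⟨⟨v, v⟩, (hP v v).2 ⟨hv, Or.inl rfl⟩, rfl⟩
    · obtain ⟨d, hd, hvd⟩ := hD v hv
      exact ⟨⟨d, v⟩, (hP d v).2 ⟨hd, Or.inr hvd.symm⟩, rfl⟩
  have hNcard : ∀ d, #(N d) = r + 1 := fun d => by
    rw [card_insert_of_notMem (G.notMem_neighborFinset_self d), card_neighborFinset_eq_degree,
      hreg d]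
  have hPcard : #P ≤ #(univ : Finset V) := by
    rw [card_sigma, sum_congr rfl fun d _ => hNcard d, sum_const, smul_eq_mul, card_univ, ← hcard,
      Set.ncard_eq_toFinset_card', mul_comm]
  have hinj := injOn_of_surjOn_of_card_le _ (fun _ _ => mem_coe.2 (mem_univ _)) hsurj hPcard
  intro v
  obtain ⟨p, hp, rfl⟩ := hsurj (mem_univ v)
  refine ⟨p.1, (hP p.1 p.2).1 hp, fun d hd => ?_⟩
  exact congrArg Sigma.fst (hinj ((hP d p.2).2 hd) hp rfl)

namespace IsEfficientDomSet

theorem isIndepSetIn (hD : IsEfficientDomSet G D) : IsIndepSetIn G D := fun _ hd d' hd' hdd' =>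
  hdd'.ne ((hD d').unique ⟨hd, Or.inr hdd'⟩ ⟨hd', Or.inl rfl⟩)

noncomputable def dominator (hD : IsEfficientDomSet G D) (v : V) : V := (hD v).exists.choose

theorem dominator_mem (hD : IsEfficientDomSet G D) (v : V) : hD.dominator v ∈ D :=
  (hD v).exists.choose_spec.1

theorem dominator_adj (hD : IsEfficientDomSet G D) {v : V} (hv : v ∉ D) :
    G.Adj (hD.dominator v) v :=
  (hD v).exists.choose_spec.2.resolve_left fun h => hv (h ▸ hD.dominator_mem v)

theorem eq_dominator (hD : IsEfficientDomSet G D) {d v : V} (hd : d ∈ D) (hdv : G.Adj d v) :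
    d = hD.dominator v :=
  (hD v).unique ⟨hd, Or.inr hdv⟩ (hD v).exists.choose_spec

theorem card_neighborFinset_filter_notMem [G.LocallyFinite] [DecidablePred (· ∈ D)]
    (hD : IsEfficientDomSet G D) {v : V} (hv : v ∉ D) :
    #{w ∈ G.neighborFinset v | w ∉ D} = G.degree v - 1 := by
  have hone : #{w ∈ G.neighborFinset v | w ∈ D} = 1 := by
    refine card_eq_one.2 ⟨hD.dominator v, ext fun w => ?_⟩
    simp only [mem_filter, mem_neighborFinset, mem_singleton]
    constructor
    · rintro ⟨hvw, hw⟩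
      exact hD.eq_dominator hw hvw.symm
    · rintro rfl
      exact ⟨(hD.dominator_adj hv).symm, hD.dominator_mem v⟩
  have := card_filter_add_card_filter_not (s := G.neighborFinset v) (· ∈ D)
  rw [hone, card_neighborFinset_eq_degree] at this
  omega

end IsEfficientDomSet

end EfficientDomination

namespace IsBipartitionOf

variable {G : SimpleGraph V} {A B : Set V}

theorem symm (h : IsBipartitionOf G A B) : IsBipartitionOf G B A :=
  ⟨by rw [Set.union_comm, h.1], h.2.1.symm, fun _ _ huv => (h.2.2 huv.symm).symm⟩

theorem mem_right_of_adj (h : IsBipartitionOf G A B) {u v : V} (huv : G.Adj u v) (hu : u ∈ A) :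
    v ∈ B :=
  (h.2.2 huv).1 hu

theorem mem_left_iff_notMem (h : IsBipartitionOf G A B) {u v : V} (huv : G.Adj u v) :
    u ∈ A ↔ v ∉ A := by
  have hv : v ∈ A ∪ B := h.1 ▸ Set.mem_univ v
  rw [h.2.2 huv]
  exact ⟨fun hvB hvA => Set.disjoint_left.1 h.2.1 hvA hvB, hv.resolve_left⟩

theorem notMem_left_of_mem_right (h : IsBipartitionOf G A B) {v : V} (hv : v ∈ B) : v ∉ A :=
  Set.disjoint_right.1 h.2.1 hv

theorem isIndepSetIn (h : IsBipartitionOf G A B) : IsIndepSetIn G A := fun _ hu _ hv huv =>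
  (h.mem_left_iff_notMem huv).1 hu hv

theorem cliqueFree_three (h : IsBipartitionOf G A B) : G.CliqueFree 3 := by
  classical
  intro s hs
  obtain ⟨a, b, c, hab, hac, hbc, -⟩ := is3Clique_iff.1 hs
  have := h.mem_left_iff_notMem hab
  have := h.mem_left_iff_notMem hac
  have := h.mem_left_iff_notMem hbc
  tauto

end IsBipartitionOf

/-- `G - D` is bipartite and `(r - 1)`-regular. -/
theorem exists_equiv_adj_sdiff [Fintype V] {G : SimpleGraph V} [DecidableRel G.Adj] {r : ℕ}
    (hr : 2 ≤ r) (hreg : G.IsRegularOfDegree r) {A B D : Set V} (hAB : IsBipartitionOf G A B)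
    (hD : IsEfficientDomSet G D) :
    ∃ e : ↥(A \ D) ≃ ↥(B \ D), ∀ a : ↥(A \ D), G.Adj a (e a) := by
  classical
  have hdeg : ∀ {P Q : Set V}, IsBipartitionOf G P Q →
      ∀ p : ↥(P \ D), #{q : ↥(Q \ D) | G.Adj p q} = r - 1 := by
    intro P Q hPQ p
    calc #{q : ↥(Q \ D) | G.Adj p q} = #{w ∈ G.neighborFinset p | w ∈ Q \ D} := by
          rw [← card_subtype (· ∈ Q \ D) (G.neighborFinset p)]
          exact congrArg card (by ext q; simp)
      _ = #{w ∈ G.neighborFinset p | w ∉ D} := by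
          refine congrArg card (filter_congr fun w hw => ?_)
          have := hPQ.mem_right_of_adj ((G.mem_neighborFinset p w).1 hw) p.2.1
          simp [this]
      _ = r - 1 := by rw [hD.card_neighborFinset_filter_notMem p.2.2, hreg p]
  refine exists_equiv_of_forall_card_filter_eq (fun (a : ↥(A \ D)) (b : ↥(B \ D)) => G.Adj a b)
    (by omega) (hdeg hAB) fun b => ?_
  simpa only [G.adj_comm] using hdeg hAB.symm b

namespace DoubleStarCopy

variable {G : SimpleGraph V} [G.LocallyFinite] [DecidableEq V] {r : ℕ} {v w : V}

theorem card_neighborFinset_erase (hv : G.degree v = r) (hw : G.Adj v w) :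
    #((G.neighborFinset v).erase w) = r - 1 := by
  rw [card_erase_of_mem ((G.mem_neighborFinset v w).2 hw), card_neighborFinset_eq_degree, hv]

noncomputable def ofNeighbor (hv : G.degree v = r) (hw : G.Adj v w) (p : V) :
    DoubleStarCopy V r where
  center := v
  mid := w
  pend := p
  leaf i := (equivFinOfCardEq (card_neighborFinset_erase hv hw)).symm i

variable (hv : G.degree v = r) (hw : G.Adj v w) (p : V)

theorem leaf_injective_ofNeighbor : Function.Injective (ofNeighbor hv hw p).leaf :=
  Subtype.val_injective.comp (Equiv.injective _)

theorem mem_range_leaf_ofNeighbor {x : V} :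
    x ∈ Set.range (ofNeighbor hv hw p).leaf ↔ x ≠ w ∧ G.Adj v x := by
  rw [← mem_neighborFinset, ← mem_erase]
  constructor
  · rintro ⟨i, rfl⟩
    exact Subtype.prop _
  · intro hx
    exact ⟨equivFinOfCardEq (card_neighborFinset_erase hv hw) ⟨x, hx⟩, by simp [ofNeighbor]⟩

theorem mem_edges_ofNeighbor {e : Sym2 V} :
    e ∈ (ofNeighbor hv hw p).edges ↔ e = s(w, p) ∨ e ∈ G.incidenceSet v := by
  simp only [edges, Set.mem_insert_iff, Set.mem_range]
  constructor
  · rintro (rfl | rfl | ⟨i, rfl⟩)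
    · exact Or.inr ((G.mem_incidenceSet _ _).2 hw)
    · exact Or.inl rfl
    · exact Or.inr ((G.mem_incidenceSet _ _).2
        ((mem_range_leaf_ofNeighbor hv hw p).1 ⟨i, rfl⟩).2)
  · rintro (rfl | ⟨he, hve⟩)
    · exact Or.inr (Or.inl rfl)
    obtain ⟨x, rfl⟩ := Sym2.mem_iff_exists.1 hve
    by_cases hxw : x = w
    · exact Or.inl (hxw ▸ rfl)
    · obtain ⟨i, hi⟩ := (mem_range_leaf_ofNeighbor hv hw p).2 ⟨hxw, he⟩
      exact Or.inr (Or.inr ⟨i, by rw [← hi]; rfl⟩)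

theorem isCopyIn_ofNeighbor (hp : G.Adj w p) (hpv : p ≠ v) (hvp : ¬G.Adj v p) :
    (ofNeighbor hv hw p).IsCopyIn G := by
  have hleaf := fun x => mem_range_leaf_ofNeighbor hv hw p (x := x)
  refine ⟨?_, fun e he => ?_⟩
  · simp only [vertList, List.nodup_cons, List.mem_cons, List.mem_ofFn, ← Set.mem_range, hleaf,
      List.nodup_ofFn.2 (leaf_injective_ofNeighbor hv hw p)]
    refine ⟨?_, ?_, ?_, trivial⟩
    · rintro (h | h | ⟨-, h⟩)
      exacts [hw.ne h, hpv h.symm, G.irrefl h]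
    · rintro (h | ⟨h, -⟩)
      exacts [hp.ne h, h rfl]
    · exact fun h => hvp h.2
  · rcases (mem_edges_ofNeighbor hv hw p).1 he with rfl | he
    exacts [hp, G.incidenceSet_subset v he]

end DoubleStarCopy

theorem notMem_incidenceSet_of_mem_removedEdges {G : SimpleGraph V} {S : Set V} {e : Sym2 V}
    (he : e ∈ removedEdges G S) {v : V} (hv : v ∈ S) : e ∉ G.incidenceSet v :=
  fun hve => he.2 v hve.2 hv

/-- Each `c ∈ C` becomes the centre of the double star formed by its `r` incident edges and the
edge of `G ∖ C` matched to it; independence of `C` makes these stars edge-disjoint, and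
triangle-freeness makes them trees. -/
theorem isDSSDecomposable_of_auxHasPerfectMatching {G : SimpleGraph V} [G.LocallyFinite] {r : ℕ}
    {C : Set V} (hC : IsIndepSetIn G C) (hdeg : ∀ c ∈ C, G.degree c = r) (h3 : G.CliqueFree 3)
    (hM : AuxHasPerfectMatching G C) : IsDSSDecomposable G r C := by
  classical
  obtain ⟨M, hM⟩ := hM
  choose mid hmid hadj using hM
  set pend : C → V := fun c => Sym2.Mem.other (hmid c)
  have hM_eq : ∀ c, (M c : Sym2 V) = s(mid c, pend c) := fun c => (Sym2.other_spec _).symm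
  let t : C → DoubleStarCopy V r := fun c => .ofNeighbor (hdeg c c.2) (hadj c) (pend c)
  have hmem_t : ∀ c e, e ∈ (t c).edges ↔ e = M c ∨ e ∈ G.incidenceSet c := fun c e => by
    rw [hM_eq]; exact DoubleStarCopy.mem_edges_ofNeighbor ..
  refine ⟨Set.range t, ⟨?_, fun e he => ?_⟩, ?_⟩
  · rintro _ ⟨c, rfl⟩
    have hpend : pend c ∉ C := (M c).2.2 _ (hM_eq c ▸ Sym2.mem_mk_right _ _)
    have hp : G.Adj (mid c) (pend c) := by
      rw [← G.mem_edgeSet, ← hM_eq]; exact (M c).2.1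
    refine DoubleStarCopy.isCopyIn_ofNeighbor _ _ _ hp (fun h => hpend (h ▸ c.2)) fun hcp => ?_
    exact h3 _ (is3Clique_triple_iff.2 ⟨hadj c, hcp, hp⟩)
  by_cases hC_e : ∀ v ∈ e, v ∉ C
  · set c := M.symm ⟨e, he, hC_e⟩
    have hMc : (M c : Sym2 V) = e := by simp [c]
    refine ⟨t c, ⟨⟨c, rfl⟩, (hmem_t c e).2 (Or.inl hMc.symm)⟩, ?_⟩
    rintro _ ⟨⟨c', rfl⟩, he'⟩
    rcases (hmem_t c' e).1 he' with h | ⟨-, hc'e⟩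
    · rw [M.injective (Subtype.ext (h.symm.trans hMc.symm))]
    · exact absurd c'.2 (hC_e c' hc'e)
  · push Not at hC_e
    obtain ⟨c, hce, hc⟩ := hC_e
    refine ⟨t ⟨c, hc⟩, ⟨⟨_, rfl⟩, (hmem_t _ e).2 (Or.inr ⟨he, hce⟩)⟩, ?_⟩
    rintro _ ⟨⟨c', rfl⟩, he'⟩
    rcases (hmem_t c' e).1 he' with rfl | ⟨-, hc'e⟩
    · exact absurd ⟨he, hce⟩ (notMem_incidenceSet_of_mem_removedEdges (M c').2 hc)
    by_contra hne
    have hcc' : (c' : V) ≠ c := fun h => hne (congrArg t (Subtype.ext h))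
    rw [(Sym2.mem_and_mem_iff hcc').1 ⟨hc'e, hce⟩, G.mem_edgeSet] at he
    exact hC c'.2 hc he
  · ext v
    refine ⟨fun hv => ⟨_, ⟨⟨v, hv⟩, rfl⟩, rfl⟩, ?_⟩
    rintro ⟨_, ⟨c, rfl⟩, rfl⟩
    exact c.2

section DominatorEdges

variable {G : SimpleGraph V} {A B D : Set V}

theorem mk_dominator_mem_removedEdges (hAB : IsBipartitionOf G A B) (hD : IsEfficientDomSet G D)
    {b : V} (hb : b ∈ B \ D) :
    s(b, hD.dominator b) ∈ removedEdges G (A \ D) := by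
  refine ⟨(hD.dominator_adj hb.2).symm, fun v hv hvA => ?_⟩
  rcases Sym2.mem_iff.1 hv with rfl | rfl
  exacts [hAB.notMem_left_of_mem_right hb.1 hvA.1, hvA.2 (hD.dominator_mem _)]

theorem mk_dominator_eq_of_adj (hAB : IsBipartitionOf G A B) (hD : IsEfficientDomSet G D)
    {a b : V} (hab : G.Adj a b) (ha : a ∈ A) (haD : a ∉ A \ D) :
    b ∈ B \ D ∧ s(b, hD.dominator b) = s(a, b) := by
  have haD : a ∈ D := by simpa [ha] using haD
  refine ⟨⟨hAB.mem_right_of_adj hab ha, fun hb => hD.isIndepSetIn haD hb hab⟩, ?_⟩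
  rw [← hD.eq_dominator haD hab, Sym2.eq_swap]

/-- The edges avoiding `A \ D` are exactly the edges joining a vertex of `B \ D` to its
dominator. -/
theorem bijective_mk_dominator (hAB : IsBipartitionOf G A B) (hD : IsEfficientDomSet G D) :
    Function.Bijective fun b : ↥(B \ D) =>
      (⟨_, mk_dominator_mem_removedEdges hAB hD b.2⟩ : ↥(removedEdges G (A \ D))) := by
  refine ⟨fun b b' h => Subtype.ext ?_, fun ⟨z, hz⟩ => ?_⟩
  · rcases Sym2.eq_iff.1 (congrArg Subtype.val h) with ⟨h, -⟩ | ⟨h, -⟩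
    exacts [h, absurd (h ▸ hD.dominator_mem _) b.2.2]
  induction z using Sym2.ind with
  | _ x y => ?_
  have hxy : G.Adj x y := hz.1
  have hx := hz.2 x (Sym2.mem_mk_left x y)
  have hy := hz.2 y (Sym2.mem_mk_right x y)
  by_cases hxA : x ∈ A
  · obtain ⟨hb, heq⟩ := mk_dominator_eq_of_adj hAB hD hxy hxA hx
    exact ⟨⟨y, hb⟩, Subtype.ext heq⟩
  · have hyA : y ∈ A := not_not.1 (mt (hAB.mem_left_iff_notMem hxy).2 hxA)
    obtain ⟨hb, heq⟩ := mk_dominator_eq_of_adj hAB hD hxy.symm hyA hy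
    exact ⟨⟨x, hb⟩, Subtype.ext (heq.trans Sym2.eq_swap)⟩

theorem auxHasPerfectMatching_sdiff (hAB : IsBipartitionOf G A B) (hD : IsEfficientDomSet G D)
    (e : ↥(A \ D) ≃ ↥(B \ D)) (he : ∀ a : ↥(A \ D), G.Adj a (e a)) :
    AuxHasPerfectMatching G (A \ D) :=
  ⟨e.trans (Equiv.ofBijective _ (bijective_mk_dominator hAB hD)),
    fun a => ⟨e a, Sym2.mem_mk_left _ _, he a⟩⟩

end DominatorEdges

theorem statement13_general {V : Type*} [Fintype V] (G : SimpleGraph V) [DecidableRel G.Adj]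
    (n : ℕ) (hn : Fintype.card V = 2 * n) (r : ℕ) (hr : 2 ≤ r)
    (hreg : G.IsRegularOfDegree r)
    (hbip : ∃ A B : Set V, IsBipartitionOf G A B)
    (hdom : (r + 1) * domNumber G = 2 * n) :
    HasDSDecomp G r := by
  obtain ⟨A, B, hAB⟩ := hbip
  obtain ⟨D, hDdom, hDcard⟩ := exists_isDomSet_ncard_eq_domNumber G
  have hD : IsEfficientDomSet G D := isEfficientDomSet_of_card hreg hDdom (by rw [hDcard, hdom, hn])
  obtain ⟨e, he⟩ := exists_equiv_adj_sdiff hr hreg hAB hD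
  obtain ⟨𝒟, h𝒟, -⟩ := isDSSDecomposable_of_auxHasPerfectMatching
    (fun _ hu _ hv => hAB.isIndepSetIn hu.1 hv.1) (fun c _ => hreg c) hAB.cliqueFree_three
    (auxHasPerfectMatching_sdiff hAB hD e he)
  exact ⟨𝒟, h𝒟⟩

/-- Let `r ≥ 2` and let `G` be a bipartite `r`-regular graph of order
`2n` with `(r+1) ∣ n` and `γ(G) = 2n/(r+1)`.  Then `G` has an
`S_{1,r-1}`-decomposition. -/
theorem statement13 {V : Type*} [Fintype V] (G : SimpleGraph V) [DecidableRel G.Adj]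
    (n : ℕ) (hn : Fintype.card V = 2 * n) (r : ℕ) (hr : 2 ≤ r)
    (hreg : G.IsRegularOfDegree r)
    (hbip : ∃ A B : Set V, IsBipartitionOf G A B)
    (hdvd : (r + 1) ∣ n) (hdom : (r + 1) * domNumber G = 2 * n) :
    HasDSDecomp G r :=
  statement13_general G n hn r hr hreg hbip hdom
end
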